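/- arXiv:2503.24279 — 5 statements merged into one kernel-verified Lean document; each statement's English description precedes it below -/
import Mathlib

section
/- Let F : A → B be a functor between groupoids that is injective on objects, an equivalence of categories, and admits a retraction R : B → A with R ∘ F = id_A. If moreover the functor (dom,cod) : Arr(B) → B × B has the right lifting property against F, then R is a quasi-inverse of F, i.e. F is an adjoint equivalence. -/
open CategoryTheory

universe u v

/-- The endpoint functor `(dom, cod) : Arr(B) ⥤ B × B`. -/
def endpoints (B : Type u) [Groupoid.{v} B] : Arrow B ⥤ B × B where
  obj f := (f.left, f.right)
  map φ := (φ.left, φ.right)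

/-!
Functors `C ⥤ Arrow D` with endpoints `G` and `H` are the same as natural transformations
`G ⟶ H`. The identity transformation of `F` together with `(R ⋙ F, 𝟭 B)` forms a commuting
square, since `F ⋙ R ⋙ F = F`; a diagonal filler is then a natural transformation
`R ⋙ F ⟶ 𝟭 B`, which is an isomorphism because `B` is a groupoid.
-/

namespace CategoryTheory

variable {C : Type*} [Category C] {D : Type u} [Groupoid.{v} D] {G H : C ⥤ D}

def NatTrans.toArrowFunctor (α : G ⟶ H) : C ⥤ Arrow D where
  obj X := Arrow.mk (α.app X)
  map f := Arrow.homMk (G.map f) (H.map f) (α.naturality f)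

lemma NatTrans.toArrowFunctor_comp_endpoints (α : G ⟶ H) :
    α.toArrowFunctor ⋙ endpoints D = G.prod' H :=
  rfl

def NatTrans.ofCompEndpointsEq (L : C ⥤ Arrow D) (h : L ⋙ endpoints D = G.prod' H) : G ⟶ H :=
  eqToHom (congrArg (· ⋙ Prod.fst D D) h).symm ≫ Functor.whiskerLeft L Arrow.leftToRight ≫
    eqToHom (congrArg (· ⋙ Prod.snd D D) h)

instance (L : C ⥤ Arrow D) (h : L ⋙ endpoints D = G.prod' H) :
    IsIso (NatTrans.ofCompEndpointsEq L h) :=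
  NatIso.isIso_of_isIso_app _

end CategoryTheory

theorem stmt6_general {A B : Type u} [Groupoid.{u} A] [Groupoid.{u} B]
    (F : A ⥤ B)
    (R : B ⥤ A) (hR : F ⋙ R = 𝟭 A)
    (hlift : ∀ (U : A ⥤ Arrow B) (V : B ⥤ B × B),
      F ⋙ V = U ⋙ endpoints B →
      ∃ L : B ⥤ Arrow B, F ⋙ L = U ∧ L ⋙ endpoints B = V) :
    Nonempty (F ⋙ R ≅ 𝟭 A) ∧ Nonempty (R ⋙ F ≅ 𝟭 B) := by
  have hsquare :
      F ⋙ (R ⋙ F).prod' (𝟭 B) = NatTrans.toArrowFunctor (𝟙 F) ⋙ endpoints B :=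
    calc F ⋙ (R ⋙ F).prod' (𝟭 B) = ((F ⋙ R) ⋙ F).prod' F := rfl
      _ = F.prod' F := by rw [hR, Functor.id_comp]
      _ = NatTrans.toArrowFunctor (𝟙 F) ⋙ endpoints B :=
        (NatTrans.toArrowFunctor_comp_endpoints _).symm
  obtain ⟨L, -, hL⟩ := hlift _ _ hsquare
  exact ⟨⟨eqToIso hR⟩, ⟨asIso (NatTrans.ofCompEndpointsEq L hL)⟩⟩

/-- if `F : A ⥤ B` is an injective-on-objects equivalence of
groupoids with a strict retraction `R`, and `(dom,cod) : Arr(B) ⥤ B × B` has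
the right lifting property against `F`, then `R` is a quasi-inverse of `F`,
i.e. `F` is an adjoint equivalence with inverse `R`. -/
theorem stmt6 {A B : Type u} [Groupoid.{u} A] [Groupoid.{u} B]
    (F : A ⥤ B) (hinj : Function.Injective F.obj) (heq : F.IsEquivalence)
    (R : B ⥤ A) (hR : F ⋙ R = 𝟭 A)
    (hlift : ∀ (U : A ⥤ Arrow B) (V : B ⥤ B × B),
      F ⋙ V = U ⋙ endpoints B →
      ∃ L : B ⥤ Arrow B, F ⋙ L = U ∧ L ⋙ endpoints B = V) :
    Nonempty (F ⋙ R ≅ 𝟭 A) ∧ Nonempty (R ⋙ F ≅ 𝟭 B) :=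
  stmt6_general F R hR hlift
end

section
/- Let P : X → G be an isofibration of groupoids, let F, F' : H → G be functors and α : F ≅ F' a natural isomorphism. Then the pullback groupoids F*X and F'*X (strict pullbacks of P along F and F') are equivalent as categories over H. -/
open CategoryTheory

universe u v

/-- An isofibration of groupoids. -/
def IsIsofibration {E : Type*} {B : Type*} [Category E] [Category B]
    (P : E ⥤ B) : Prop :=
  ∀ (e : E) (b : B) (g : P.obj e ⟶ b),
    ∃ (e' : E) (f : e ⟶ e') (h : P.obj e' = b), P.map f ≫ eqToHom h = g

variable {H X G : Type u} [Groupoid.{v} H] [Groupoid.{v} X] [Groupoid.{v} G]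

/-- The strict pullback of `P : X ⥤ G` along `F : H ⥤ G`. -/
structure StrictPB (F : H ⥤ G) (P : X ⥤ G) : Type u where
  h : H
  x : X
  eq : F.obj h = P.obj x

instance (F : H ⥤ G) (P : X ⥤ G) : Category (StrictPB F P) where
  Hom a b := {f : (a.h ⟶ b.h) × (a.x ⟶ b.x) //
    F.map f.1 ≫ eqToHom b.eq = eqToHom a.eq ≫ P.map f.2}
  id a := ⟨(𝟙 _, 𝟙 _), by simp⟩
  comp f g := ⟨(f.1.1 ≫ g.1.1, f.1.2 ≫ g.1.2), by
    simp only [Functor.map_comp, Category.assoc, g.2, reassoc_of% f.2]⟩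
  id_comp f := Subtype.ext (Prod.ext (by simp) (by simp))
  comp_id f := Subtype.ext (Prod.ext (by simp) (by simp))
  assoc f g h := Subtype.ext (Prod.ext (by simp) (by simp))

/-- The projection from the strict pullback to `H`. -/
def StrictPB.proj (F : H ⥤ G) (P : X ⥤ G) : StrictPB F P ⥤ H where
  obj a := a.h
  map f := f.1.1
  map_id _ := rfl
  map_comp _ _ := rfl

/-!
Lift each component `α_h : F h ≅ F' h` along `P`, starting at `x` over `F h`, to an isomorphism
`ℓ : x ≅ x'`. Sending `(h, x)` to `(h, x')` and conjugating `X`-components of morphisms by these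
lifts gives a functor over `H`; by naturality of `α` a pair `(u, v)` is a morphism of `F*X` iff
`(u, ℓ⁻¹ v ℓ)` is one of `F'*X`, which makes the functor fully faithful, and lifting the components
of `α⁻¹` shows that it is essentially surjective.
-/

namespace IsIsofibration

variable {E B : Type*} [Category E] [Category B] {P : E ⥤ B} (hP : IsIsofibration P)

noncomputable def liftObj {e : E} {b : B} (g : P.obj e ⟶ b) : E := (hP e b g).choose

noncomputable def lift {e : E} {b : B} (g : P.obj e ⟶ b) : e ⟶ hP.liftObj g :=
  (hP e b g).choose_spec.choose

lemma obj_liftObj {e : E} {b : B} (g : P.obj e ⟶ b) : P.obj (hP.liftObj g) = b :=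
  (hP e b g).choose_spec.choose_spec.choose

lemma map_lift {e : E} {b : B} (g : P.obj e ⟶ b) :
    P.map (hP.lift g) = g ≫ eqToHom (hP.obj_liftObj g).symm :=
  (comp_eqToHom_iff _ _ _).1 (hP e b g).choose_spec.choose_spec.choose_spec

end IsIsofibration

namespace StrictPB

variable {F F' : H ⥤ G} {P : X ⥤ G}

@[ext]
lemma hom_ext {a b : StrictPB F P} {f g : a ⟶ b} (h₁ : f.1.1 = g.1.1) (h₂ : f.1.2 = g.1.2) :
    f = g :=
  Subtype.ext (Prod.ext h₁ h₂)

@[simp] lemma comp_fst {a b c : StrictPB F P} (f : a ⟶ b) (g : b ⟶ c) :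
    (f ≫ g).1.1 = f.1.1 ≫ g.1.1 := rfl

@[simp] lemma comp_snd {a b c : StrictPB F P} (f : a ⟶ b) (g : b ⟶ c) :
    (f ≫ g).1.2 = f.1.2 ≫ g.1.2 := rfl

@[simp] lemma id_fst (a : StrictPB F P) : (𝟙 a : a ⟶ a).1.1 = 𝟙 a.h := rfl

@[simp] lemma id_snd (a : StrictPB F P) : (𝟙 a : a ⟶ a).1.2 = 𝟙 a.x := rfl

noncomputable instance : Groupoid (StrictPB F P) where
  inv f := ⟨(inv f.1.1, inv f.1.2), by
    rw [Functor.map_inv, Functor.map_inv, IsIso.inv_comp_eq, reassoc_of% f.2]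
    simp⟩
  inv_comp f := by ext <;> simp
  comp_inv f := by ext <;> simp

lemma hom_compat_transport_iff (α : F ≅ F') {a b : StrictPB F P} (u : a.h ⟶ b.h)
    (v : a.x ⟶ b.x) {ya yb : X} (ea : F'.obj a.h = P.obj ya) (eb : F'.obj b.h = P.obj yb)
    (ℓa : a.x ⟶ ya) (ℓb : b.x ⟶ yb)
    (hℓa : P.map ℓa = eqToHom a.eq.symm ≫ α.hom.app a.h ≫ eqToHom ea)
    (hℓb : P.map ℓb = eqToHom b.eq.symm ≫ α.hom.app b.h ≫ eqToHom eb) :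
    F'.map u ≫ eqToHom eb = eqToHom ea ≫ P.map (inv ℓa ≫ v ≫ ℓb) ↔
      F.map u ≫ eqToHom b.eq = eqToHom a.eq ≫ P.map v := by
  rw [← NatIso.naturality_1 α u, comp_eqToHom_iff b.eq]
  simp only [Functor.map_comp, Functor.map_inv, hℓa, hℓb, IsIso.inv_comp, inv_eqToHom,
    NatIso.inv_hom_app, Category.assoc, eqToHom_trans_assoc, eqToHom_refl, Category.id_comp,
    cancel_epi]
  simp only [← Category.assoc, cancel_mono]

variable (hP : IsIsofibration P) (α : F ≅ F')

def transportComponent (a : StrictPB F P) : P.obj a.x ⟶ F'.obj a.h :=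
  eqToHom a.eq.symm ≫ α.hom.app a.h

lemma map_lift_transportComponent (a : StrictPB F P) :
    P.map (hP.lift (transportComponent α a)) =
      eqToHom a.eq.symm ≫ α.hom.app a.h ≫ eqToHom (hP.obj_liftObj _).symm := by
  rw [IsIsofibration.map_lift, transportComponent, Category.assoc]

noncomputable def transport : StrictPB F P ⥤ StrictPB F' P where
  obj a := ⟨a.h, hP.liftObj (transportComponent α a), (hP.obj_liftObj _).symm⟩
  map {a b} φ := ⟨(φ.1.1, inv (hP.lift (transportComponent α a)) ≫ φ.1.2 ≫
      hP.lift (transportComponent α b)),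
    (hom_compat_transport_iff α _ _ _ _ _ _ (map_lift_transportComponent hP α a)
      (map_lift_transportComponent hP α b)).2 φ.2⟩
  map_id _ := by ext <;> simp
  map_comp _ _ := by ext <;> simp

instance : (transport hP α).Faithful where
  map_injective {a b} φ ψ h := by
    ext
    · exact congrArg (fun f => f.1.1) h
    · have h₂ := congrArg (fun f => f.1.2) h
      dsimp only [transport] at h₂
      rwa [cancel_epi, cancel_mono] at h₂

instance : (transport hP α).Full where
  map_surjective {a b} ψ := by
    -- exposes `liftObj` in the type of `ψ`, so that `inv` below finds its `IsIso` instance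
    dsimp only [transport] at ψ
    refine ⟨⟨(ψ.1.1, hP.lift (transportComponent α a) ≫ ψ.1.2 ≫
      inv (hP.lift (transportComponent α b))), ?_⟩, ?_⟩
    · exact (hom_compat_transport_iff α _ _ _ _ _ _ (map_lift_transportComponent hP α a)
        (map_lift_transportComponent hP α b)).1 (by simpa using ψ.2)
    · ext <;> simp [transport]

instance : (transport hP α).EssSurj where
  mem_essImage b := by
    let a : StrictPB F P :=
      ⟨b.h, hP.liftObj (transportComponent α.symm b), (hP.obj_liftObj _).symm⟩
    have h := hom_compat_transport_iff α (𝟙 a.h) (𝟙 a.x) (b := a) _ b.eq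
      (hP.lift (transportComponent α a))
      (inv (hP.lift (transportComponent α.symm b)))
      (map_lift_transportComponent hP α a)
      (by simp [map_lift_transportComponent, a])
    exact ⟨a, ⟨asIso ⟨(𝟙 b.h, _), h.2 (by simp)⟩⟩⟩

end StrictPB

/-- if `P : X ⥤ G` is an isofibration and `α : F ≅ F'`, then the
strict pullbacks of `P` along `F` and along `F'` are equivalent over `H`. -/
theorem stmt8 (P : X ⥤ G) (hP : IsIsofibration P) (F F' : H ⥤ G) (α : F ≅ F') :
    ∃ E : StrictPB F P ⥤ StrictPB F' P,
      E.IsEquivalence ∧ E ⋙ StrictPB.proj F' P = StrictPB.proj F P :=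
  ⟨StrictPB.transport hP α, { }, rfl⟩
end

section
/- In a presheaf category on a small category C, an object K is (super-)compact — i.e., every jointly epimorphic family of maps into K contains a single epimorphism — if and only if K admits an epimorphism from a representable presheaf. -/
/-!
A jointly epimorphic family of presheaves is jointly surjective: the union of the images of
the family is a subpresheaf whose inclusion is epi, hence everything. So if `p : y c ⟶ K` is
epi, the element of `K(c)` corresponding to `p` lies in the image of some `f i`; then `p`
factors through `f i`, which is therefore epi. Conversely, the family of all maps from
representables into `K` is jointly epimorphic by the Yoneda lemma.
-/

open CategoryTheory Opposite

universe u v w t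

namespace CategoryTheory

variable {D : Type u} [Category.{v} D] {K : D ⥤ Type w} {ι : Type t}
  {E : ι → D ⥤ Type w} (f : ∀ i, E i ⟶ K)

lemma Subfunctor.epi_ι_iSup_range
    (hf : ∀ {Z : D ⥤ Type w} (g h : K ⟶ Z), (∀ i, f i ≫ g = f i ≫ h) → g = h) :
    Epi (⨆ i, Subfunctor.range (f i)).ι where
  left_cancellation g h hgh := hf g h fun i => by
    rw [← Subfunctor.lift_ι (f i) (le_iSup (fun i => Subfunctor.range (f i)) i),
      Category.assoc, Category.assoc, hgh]

open Subfunctor in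
lemma exists_app_eq_of_jointly_epi
    (hf : ∀ {Z : D ⥤ Type w} (g h : K ⟶ Z), (∀ i, f i ≫ g = f i ≫ h) → g = h)
    (X : D) (x : K.obj X) : ∃ i e, (f i).app X e = x := by
  have := epi_ι_iSup_range f hf
  have htop : ⨆ i, range (f i) = ⊤ := by
    rw [← range_ι (⨆ i, range (f i))]
    exact range_eq_top _
  have hx : x ∈ (⨆ i, range (f i)).obj X := by simp [htop]
  simpa only [iSup_obj, Set.mem_iUnion, range_obj, Set.mem_range] using hx

end CategoryTheory

/-- in a presheaf category, an object `K` is (super-)compact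
(every jointly epimorphic family into `K` contains an epimorphism) iff `K`
admits an epimorphism from a representable. -/
theorem stmt11 {C : Type u} [SmallCategory C] (K : Cᵒᵖ ⥤ Type u) :
    (∀ {ι : Type u} (E : ι → Cᵒᵖ ⥤ Type u) (f : ∀ i, E i ⟶ K),
        (∀ {Z : Cᵒᵖ ⥤ Type u} (g h : K ⟶ Z),
          (∀ i, f i ≫ g = f i ≫ h) → g = h) →
        ∃ i, Epi (f i)) ↔
      ∃ (c : C) (p : yoneda.obj c ⟶ K), Epi p := by
  constructor
  · intro H
    obtain ⟨⟨c, p⟩, hp⟩ := H (fun i : Σ c : C, yoneda.obj c ⟶ K => yoneda.obj i.1)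
      (fun i => i.2) fun g h hgh => hom_ext_yoneda fun c p => hgh ⟨c, p⟩
    exact ⟨c, p, hp⟩
  · rintro ⟨c, p, hp⟩ ι E f hf
    obtain ⟨i, e, he⟩ := exists_app_eq_of_jointly_epi f hf (op c) (yonedaEquiv p)
    have hfac : yonedaEquiv.symm e ≫ f i = p := by
      rw [yonedaEquiv_symm_naturality_right, he, Equiv.symm_apply_apply]
    exact ⟨i, epi_of_epi_fac hfac⟩
end

section
/- Let C be a presheaf category, and let C' be an object admitting an exact presentation A ⇉ B ↠ C' where A and B are subobjects-of-products-of-representables covered by representables (assemblies). Then the diagonal Δ : C' → C' × C' is a compact map: for every compact K and map K → C' × C', the pullback K ×_{C'×C'} C' is compact. -/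
open CategoryTheory Limits

universe u

variable {P : Type u} [SmallCategory P]

/-- A compact presheaf: one admitting an epimorphism from a representable. -/
def IsCompactPsh (K : Pᵒᵖ ⥤ Type u) : Prop :=
  ∃ (c : P) (p : yoneda.obj c ⟶ K), Epi p

/-- An assembly: a presheaf with a monomorphism into a representable and an
epimorphism from a representable. -/
def IsAssembly (A : Pᵒᵖ ⥤ Type u) : Prop :=
  (∃ (c : P) (m : A ⟶ yoneda.obj c), Mono m) ∧ IsCompactPsh A

/-!
Cover `K` by a representable `y c`. Representables are projective and `q` is epi, so
`y c ⟶ C' ⨯ C'` lifts through `q × q` to some `u : y c ⟶ B ⨯ B`. Since `A` is the kernel pair of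
`q`, it is the pullback of the diagonal of `C'` along `q × q`; pasting, the pullback of the
diagonal along `y c ⟶ C' ⨯ C'` is the pullback of `u` and `(a₁, a₂) : A ⟶ B ⨯ B`. This is a
pullback of compact presheaves over the subrepresentable `B ⨯ B`, hence covered by a pullback of
representables over a representable, which is representable since Yoneda preserves pullbacks.
-/

namespace CategoryTheory.Limits.IsKernelPair

variable {C : Type*} [Category C] {A B Q : C} {a₁ a₂ : A ⟶ B} {q : B ⟶ Q}

lemma isPullback_prod_lift_diag [HasBinaryProduct B B] [HasBinaryProduct Q Q]
    (h : IsKernelPair q a₁ a₂) :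
    IsPullback (prod.lift a₁ a₂) (a₁ ≫ q) (prod.map q q) (prod.lift (𝟙 Q) (𝟙 Q)) := by
  refine ⟨⟨by ext <;> simp [h.w, prod.lift_fst, prod.lift_snd]⟩,
    ⟨PullbackCone.IsLimit.mk _ ?_ ?_ ?_ ?_⟩⟩
  · refine fun s ↦ h.lift (s.fst ≫ prod.fst) (s.fst ≫ prod.snd) ?_
    have hfst : (s.fst ≫ prod.fst) ≫ q = s.snd := by
      simpa [prod.lift_fst] using congr($s.condition ≫ prod.fst)
    have hsnd : (s.fst ≫ prod.snd) ≫ q = s.snd := by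
      simpa [prod.lift_snd] using congr($s.condition ≫ prod.snd)
    exact hfst.trans hsnd.symm
  · exact fun s ↦ by ext <;> simp [prod.lift_fst, prod.lift_snd]
  · exact fun s ↦ by simpa [prod.lift_fst] using congr($s.condition ≫ prod.fst)
  · exact fun s m hm _ ↦ h.hom_ext (by simp [← hm, prod.lift_fst])
      (by simp [← hm, prod.lift_snd])

end CategoryTheory.Limits.IsKernelPair

universe v₁ u₁ w

instance CategoryTheory.Limits.epi_pullback_snd_of_epi {J : Type u₁} [Category.{v₁} J]
    {X Y Z : J ⥤ Type w} (f : X ⟶ Z) (g : Y ⟶ Z) [Epi f] : Epi (pullback.snd f g) := by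
  have : (MorphismProperty.epimorphisms (J ⥤ Type w)).IsStableUnderBaseChange := by
    rw [← MorphismProperty.functorCategory_epimorphisms]
    infer_instance
  exact MorphismProperty.pullback_snd (P := MorphismProperty.epimorphisms _) f g ‹Epi f›

instance CategoryTheory.projective_yoneda_obj {C : Type*} [Category C] (c : C) :
    Projective (yoneda.obj c) where
  factors {E X} f e _ := by
    obtain ⟨x, hx⟩ :=
      (epi_iff_surjective (e.app (Opposite.op c))).1 inferInstance (yonedaEquiv f)
    exact ⟨yonedaEquiv.symm x,
      yonedaEquiv.injective (by rw [yonedaEquiv_comp, Equiv.apply_symm_apply, hx])⟩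

def IsSubrepresentable (Z : Pᵒᵖ ⥤ Type u) : Prop :=
  ∃ (c : P) (m : Z ⟶ yoneda.obj c), Mono m

lemma IsSubrepresentable.prod [HasBinaryProducts P] {X Y : Pᵒᵖ ⥤ Type u}
    (hX : IsSubrepresentable X) (hY : IsSubrepresentable Y) : IsSubrepresentable (X ⨯ Y) := by
  obtain ⟨x, m, _⟩ := hX
  obtain ⟨y, m', _⟩ := hY
  exact ⟨x ⨯ y, prod.map m m' ≫ (PreservesLimitPair.iso yoneda x y).inv, inferInstance⟩

namespace IsCompactPsh

lemma yoneda_obj (c : P) : IsCompactPsh (yoneda.obj c) :=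
  ⟨c, 𝟙 _, inferInstance⟩

lemma of_epi {X Y : Pᵒᵖ ⥤ Type u} (h : IsCompactPsh X) (e : X ⟶ Y) [Epi e] :
    IsCompactPsh Y := by
  obtain ⟨c, p, _⟩ := h
  exact ⟨c, p ≫ e, epi_comp _ _⟩

lemma of_iso {X Y : Pᵒᵖ ⥤ Type u} (h : IsCompactPsh X) (e : X ≅ Y) : IsCompactPsh Y :=
  h.of_epi e.hom

lemma of_pullback_comp_left {X X' Y Z : Pᵒᵖ ⥤ Type u} (p : X' ⟶ X) [Epi p] (f : X ⟶ Z)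
    (g : Y ⟶ Z) (h : IsCompactPsh (pullback (p ≫ f) g)) : IsCompactPsh (pullback f g) :=
  h.of_epi ((pullbackRightPullbackFstIso f g p).inv ≫ pullback.snd _ _)

lemma of_pullback_comp_right {X Y Y' Z : Pᵒᵖ ⥤ Type u} (p : Y' ⟶ Y) [Epi p] (f : X ⟶ Z)
    (g : Y ⟶ Z) (h : IsCompactPsh (pullback f (p ≫ g))) : IsCompactPsh (pullback f g) :=
  (of_pullback_comp_left p g f (h.of_epi (pullbackSymmetry _ _).hom)).of_epi
    (pullbackSymmetry g f).hom

lemma pullback_of_representable [HasPullbacks P] {c d z : P} (f : yoneda.obj c ⟶ yoneda.obj z)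
    (g : yoneda.obj d ⟶ yoneda.obj z) : IsCompactPsh (pullback f g) :=
  ((yoneda_obj _).of_iso
    (PreservesPullback.iso yoneda (yoneda.preimage f) (yoneda.preimage g))).of_iso
      (pullback.congrHom (yoneda.map_preimage f) (yoneda.map_preimage g))

lemma pullback_of_isSubrepresentable [HasPullbacks P] {X Y Z : Pᵒᵖ ⥤ Type u}
    (hX : IsCompactPsh X) (hY : IsCompactPsh Y) (hZ : IsSubrepresentable Z) (f : X ⟶ Z)
    (g : Y ⟶ Z) : IsCompactPsh (pullback f g) := by
  obtain ⟨c, p, _⟩ := hX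
  obtain ⟨d, p', _⟩ := hY
  obtain ⟨z, m, _⟩ := hZ
  refine of_pullback_comp_left p f g (of_pullback_comp_right p' _ g ?_)
  exact (pullback_of_representable ((p ≫ f) ≫ m) ((p' ≫ g) ≫ m)).of_iso
    (IsPullback.of_isLimit (pullbackIsPullbackOfCompMono (p ≫ f) (p' ≫ g) m)).isoPullback.symm

end IsCompactPsh

/-- if `C'` has an exact presentation `A ⇉ B ↠ C'` by
assemblies, then the diagonal `Δ : C' ⟶ C' ⨯ C'` is a compact map: its
pullback along any map from a compact object is compact. -/
theorem stmt14 [HasFiniteLimits P] {A B C' : Pᵒᵖ ⥤ Type u}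
    (a₁ a₂ : A ⟶ B) (q : B ⟶ C') (_ : RegularEpi q) (hker : IsKernelPair q a₁ a₂)
    (hA : IsAssembly A) (hB : IsAssembly B) :
    ∀ (K : Pᵒᵖ ⥤ Type u), IsCompactPsh K → ∀ (k : K ⟶ C' ⨯ C'),
      IsCompactPsh (pullback k (prod.lift (𝟙 C') (𝟙 C'))) := by
  rintro K ⟨c, p, _⟩ k
  have : Epi q := RegularEpi.epi q ‹RegularEpi q›
  set u : yoneda.obj c ⟶ B ⨯ B := prod.lift (Projective.factorThru (p ≫ k ≫ prod.fst) q)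
    (Projective.factorThru (p ≫ k ≫ prod.snd) q)
  have hu : u ≫ prod.map q q = p ≫ k := by ext <;> simp [u, prod.lift_fst, prod.lift_snd]
  have hpaste : IsPullback (pullback.fst u (prod.lift a₁ a₂)) _ (p ≫ k)
      (prod.lift (𝟙 C') (𝟙 C')) :=
    hu ▸ (IsPullback.of_hasPullback _ _).paste_vert
      (IsKernelPair.isPullback_prod_lift_diag hker)
  have hcompact : IsCompactPsh (pullback u (prod.lift a₁ a₂)) :=
    (IsCompactPsh.yoneda_obj c).pullback_of_isSubrepresentable hA.2 (.prod hB.1 hB.1) _ _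
  exact IsCompactPsh.of_pullback_comp_left p k _ (hcompact.of_iso hpaste.isoPullback)
end

section
/- A functor between small groupoids which is injective on objects and an equivalence of categories (a trivial cofibration of the canonical (folk) model structure on Grpd) has the left lifting property against every functor which is an isofibration, i.e. a fibration of the canonical (folk) model structure on groupoids. -/
open CategoryTheory

universe u

/-- in the category of small groupoids, every trivial
cofibration (injective-on-objects equivalence) has the left lifting property
against every isofibration. -/
theorem stmt17 {A B E F : Type u} [Groupoid.{u} A] [Groupoid.{u} B]
    [Groupoid.{u} E] [Groupoid.{u} F]
    (i : A ⥤ B) (hinj : Function.Injective i.obj) (heq : i.IsEquivalence)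
    (p : E ⥤ F) (hp : IsIsofibration p)
    (u : A ⥤ E) (v : B ⥤ F) (hsq : u ⋙ p = i ⋙ v) :
    ∃ L : B ⥤ E, i ⋙ L = u ∧ L ⋙ p = v := by
  haveI := heq
  have c : ∀ a : A, p.obj (u.obj a) = v.obj (i.obj a) := fun a => Functor.congr_obj hsq a
  have main : ∀ b : B, ∃ (a : A) (φ : i.obj a ≅ b) (e : E) (f : u.obj a ⟶ e)
      (h : p.obj e = v.obj b),
      (p.map f ≫ eqToHom h = eqToHom (c a) ≫ v.map φ.hom) ∧
      ((∃ a₀, i.obj a₀ = b) →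
        (∃ r : i.obj a = b, φ.hom = eqToHom r) ∧ (∃ he : u.obj a = e, f = eqToHom he)) := by
    intro b
    by_cases himg : ∃ a₀, i.obj a₀ = b
    · obtain ⟨a₀, q⟩ := himg
      refine ⟨a₀, eqToIso q, u.obj a₀, 𝟙 _, (c a₀).trans (congrArg v.obj q), ?_, ?_⟩
      · simp [eqToHom_map]
      · exact fun _ => ⟨⟨q, rfl⟩, ⟨rfl, by simp⟩⟩
    · refine ⟨i.objPreimage b, i.objObjPreimageIso b, ?_⟩
      obtain ⟨e, f, h, spec⟩ := hp (u.obj (i.objPreimage b)) (v.obj b)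
        (eqToHom (c _) ≫ v.map (i.objObjPreimageIso b).hom)
      exact ⟨e, f, h, spec, fun h' => absurd h' himg⟩
  choose a φ e f hpe spec extra using main
  let ψ : ∀ {b b' : B}, (b ⟶ b') → (a b ⟶ a b') := fun {b b'} β =>
    i.preimage ((φ b).hom ≫ β ≫ (φ b').inv)
  have ψcomp : ∀ {b b' b'' : B} (β : b ⟶ b') (γ : b' ⟶ b''), ψ (β ≫ γ) = ψ β ≫ ψ γ := by
    intro b b' b'' β γ
    apply i.map_injective
    simp [ψ]
  let L : B ⥤ E :=
    { obj := e
      map := fun {b b'} β => inv (f b) ≫ u.map (ψ β) ≫ f b'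
      map_id := fun b => by simp [ψ]
      map_comp := fun {b b' b''} β γ => by
        show inv (f b) ≫ u.map (ψ (β ≫ γ)) ≫ f b'' = _
        rw [ψcomp]; simp }
  refine ⟨L, ?_, ?_⟩
  · have hobj : ∀ a₀ : A, L.obj (i.obj a₀) = u.obj a₀ := by
      intro a₀
      obtain ⟨⟨r, -⟩, ⟨he, -⟩⟩ := extra (i.obj a₀) ⟨a₀, rfl⟩
      exact he.symm.trans (congrArg u.obj (hinj r))
    refine CategoryTheory.Functor.ext hobj ?_
    intro a₀ a₁ α
    obtain ⟨⟨r₀, hr₀⟩, ⟨he₀, hf₀⟩⟩ := extra (i.obj a₀) ⟨a₀, rfl⟩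
    obtain ⟨⟨r₁, hr₁⟩, ⟨he₁, hf₁⟩⟩ := extra (i.obj a₁) ⟨a₁, rfl⟩
    have ha₀ : a (i.obj a₀) = a₀ := hinj r₀
    have ha₁ : a (i.obj a₁) = a₁ := hinj r₁
    have hψ : ψ (i.map α) = eqToHom ha₀ ≫ α ≫ eqToHom ha₁.symm := by
      apply i.map_injective
      have hinv : (φ (i.obj a₁)).inv = eqToHom r₁.symm := by
        rw [show φ (i.obj a₁) = eqToIso r₁ from Iso.ext hr₁]; simp
      simp [ψ, hr₀, hinv, eqToHom_map]
    show inv (f (i.obj a₀)) ≫ u.map (ψ (i.map α)) ≫ f (i.obj a₁) = _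
    rw [hψ, hf₀, hf₁]
    simp [eqToHom_map]
  · refine CategoryTheory.Functor.ext (fun b => hpe b) ?_
    intro b b' β
    show p.map (inv (f b) ≫ u.map (ψ β) ≫ f b') = _
    have hf : ∀ b : B, p.map (f b) = eqToHom (c (a b)) ≫ v.map (φ b).hom ≫ eqToHom (hpe b).symm := by
      intro b
      have h2 : p.map (f b) = (p.map (f b) ≫ eqToHom (hpe b)) ≫ eqToHom (hpe b).symm := by simp
      rw [h2, spec b]; simp
    have hmid : p.map (u.map (ψ β)) =
        eqToHom (c (a b)) ≫ v.map (i.map (ψ β)) ≫ eqToHom (c (a b')).symm := by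
      have := Functor.congr_hom hsq (ψ β)
      simpa using this
    have hi : i.map (ψ β) = (φ b).hom ≫ β ≫ (φ b').inv := i.map_preimage _
    simp only [Functor.map_comp, Functor.map_inv, hf, hmid, hi]
    simp
end
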